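/- Let n, p ≥ 1, let x_i ∈ ℝ^p for i = 1,…,n, y ∈ ℝ^n, λ ≥ 0, and let b : ℝ → ℝ be differentiable with derivative μ = b′. Let β̂_L be a global minimizer of the lasso objective L(β) = −(1/n)∑_{i=1}^n {y_i x_iᵀβ − b(x_iᵀβ)} + λ‖β‖₁, and let β̂_DS minimize ‖β‖₁ over the generalized Dantzig selector feasible set {β ∈ ℝ^p : (1/n) max_{1≤j≤p} |∑_{i=1}^n x_{ij}(y_i − μ(x_iᵀβ))| ≤ λ}. Then ‖β̂_DS‖₁ ≤ ‖β̂_L‖₁. -/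

import Mathlib

/-!
The lasso objective restricted to the line `t ↦ β̂_L + t eⱼ` is minimized at `t = 0`. Its
smooth part has derivative `-(1/n) ∑ᵢ xᵢⱼ (yᵢ - μ(xᵢᵀβ̂_L))` there, while the penalty grows by at
most `λ|t|`; comparing one-sided difference quotients shows that this derivative has absolute
value at most `λ`. Hence `β̂_L` is Dantzig-feasible, and `β̂_DS`, being ℓ₁-minimal among feasible
points, has no larger ℓ₁ norm.
-/

open Finset Filter Topology Matrix

theorem abs_le_of_hasDerivAt_of_forall_le_add_abs {f : ℝ → ℝ} {d a c : ℝ}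
    (hf : HasDerivAt f d a) (hmin : ∀ t, f a ≤ f t + c * |t - a|) : |d| ≤ c := by
  have hslope := hasDerivAt_iff_tendsto_slope.mp hf
  rw [abs_le]
  constructor
  · have hright : 𝓝[>] a ≤ 𝓝[≠] a := nhdsWithin_mono _ fun t (ht : a < t) => ht.ne'
    refine ge_of_tendsto (hslope.mono_left hright) ?_
    filter_upwards [self_mem_nhdsWithin] with t (ht : a < t)
    have hmin_t := hmin t
    rw [abs_of_pos (sub_pos.mpr ht)] at hmin_t
    rw [slope_def_field, le_div_iff₀ (sub_pos.mpr ht)]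
    linarith
  · have hleft : 𝓝[<] a ≤ 𝓝[≠] a := nhdsWithin_mono _ fun t (ht : t < a) => ht.ne
    refine le_of_tendsto (hslope.mono_left hleft) ?_
    filter_upwards [self_mem_nhdsWithin] with t (ht : t < a)
    have hmin_t := hmin t
    rw [abs_of_neg (sub_neg.mpr ht)] at hmin_t
    rw [slope_def_field, div_le_iff_of_neg (sub_neg.mpr ht)]
    linarith

theorem sum_abs_add_single_le {κ : Type*} [Fintype κ] [DecidableEq κ] (β : κ → ℝ) (j : κ)
    (t : ℝ) : ∑ k, |(β + Pi.single j t : κ → ℝ) k| ≤ ∑ k, |β k| + |t| := by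
  calc ∑ k, |(β + Pi.single j t : κ → ℝ) k|
      ≤ ∑ k, (|β k| + |(Pi.single j t : κ → ℝ) k|) := sum_le_sum fun k _ => abs_add_le _ _
    _ = ∑ k, |β k| + |t| := by
      rw [sum_add_distrib]
      simp [Pi.single_apply, apply_ite]

section GLM

variable {ι κ : Type*} [Fintype ι] [Fintype κ]

/-- Averaged negative log-likelihood of a GLM with cumulant function `b`. -/
noncomputable def glmLoss (x : ι → κ → ℝ) (y : ι → ℝ) (b : ℝ → ℝ) (β : κ → ℝ) : ℝ :=
  -(1 / (Fintype.card ι : ℝ)) * ∑ i, (y i * x i ⬝ᵥ β - b (x i ⬝ᵥ β))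

def glmScore (x : ι → κ → ℝ) (y : ι → ℝ) (μ : ℝ → ℝ) (β : κ → ℝ) (j : κ) : ℝ :=
  ∑ i, x i j * (y i - μ (x i ⬝ᵥ β))

theorem hasDerivAt_glmLoss_add_single [DecidableEq κ] (x : ι → κ → ℝ) (y : ι → ℝ)
    {b μ : ℝ → ℝ} (hb : ∀ t, HasDerivAt b (μ t) t) (β : κ → ℝ) (j : κ) :
    HasDerivAt (fun t => glmLoss x y b (β + Pi.single j t))
      (-(1 / (Fintype.card ι : ℝ)) * glmScore x y μ β j) 0 := by
  have hlin : ∀ i, HasDerivAt (fun t => x i ⬝ᵥ (β + Pi.single j t)) (x i j) 0 := fun i => by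
    simp only [dotProduct_add, dotProduct_single]
    simpa using ((hasDerivAt_id (0 : ℝ)).const_mul (x i j)).const_add (x i ⬝ᵥ β)
  have hterm : ∀ i, HasDerivAt
      (fun t => y i * x i ⬝ᵥ (β + Pi.single j t) - b (x i ⬝ᵥ (β + Pi.single j t)))
      (x i j * (y i - μ (x i ⬝ᵥ β))) 0 := fun i => by
    have hbi := (hb _).comp (0 : ℝ) (hlin i)
    simp only [Pi.single_zero, add_zero] at hbi
    exact (((hlin i).const_mul (y i)).sub hbi).congr_deriv (by ring)
  exact (HasDerivAt.fun_sum fun i _ => hterm i).const_mul _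

theorem abs_glmScore_le_of_lasso_minimizer (x : ι → κ → ℝ) (y : ι → ℝ) {b μ : ℝ → ℝ}
    (hb : ∀ t, HasDerivAt b (μ t) t) {lam : ℝ} (hlam : 0 ≤ lam) {βL : κ → ℝ}
    (hβL : ∀ β, glmLoss x y b βL + lam * ∑ k, |βL k| ≤ glmLoss x y b β + lam * ∑ k, |β k|)
    (j : κ) : 1 / (Fintype.card ι : ℝ) * |glmScore x y μ βL j| ≤ lam := by
  classical
  have hline : ∀ t, glmLoss x y b (βL + Pi.single j 0)
      ≤ glmLoss x y b (βL + Pi.single j t) + lam * |t - 0| := fun t => by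
    have hmin := hβL (βL + Pi.single j t)
    have hpenalty := mul_le_mul_of_nonneg_left (sum_abs_add_single_le βL j t) hlam
    simp only [Pi.single_zero, add_zero, sub_zero]
    linarith
  have hderiv := abs_le_of_hasDerivAt_of_forall_le_add_abs
    (hasDerivAt_glmLoss_add_single x y hb βL j) hline
  rwa [abs_mul, abs_neg, abs_of_nonneg (by positivity)] at hderiv

end GLM

theorem stmt_8_general (n p : ℕ)
    (x : Fin n → Fin p → ℝ) (y : Fin n → ℝ) (lam : ℝ) (hlam : 0 ≤ lam)
    (b μ : ℝ → ℝ) (hb : ∀ t, HasDerivAt b (μ t) t)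
    (L : (Fin p → ℝ) → ℝ)
    (hL : ∀ β, L β =
      -(1 / (n : ℝ)) * ∑ i, (y i * ∑ j, x i j * β j - b (∑ j, x i j * β j)) +
        lam * ∑ j, |β j|)
    (Θ : Set (Fin p → ℝ))
    (hΘ : Θ = {β | ∀ j, (1 / (n : ℝ)) * |∑ i, x i j * (y i - μ (∑ j', x i j' * β j'))| ≤ lam})
    (βL βDS : Fin p → ℝ)
    (hβL : ∀ β, L βL ≤ L β)
    (hβDSmin : ∀ β ∈ Θ, ∑ j, |βDS j| ≤ ∑ j, |β j|) :
    ∑ j, |βDS j| ≤ ∑ j, |βL j| := by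
  have hL' : ∀ β, L β = glmLoss x y b β + lam * ∑ j, |β j| := by
    simp [hL, glmLoss, dotProduct]
  refine hβDSmin βL (hΘ ▸ fun j => ?_)
  have hscore := abs_glmScore_le_of_lasso_minimizer x y hb hlam
    (fun β => hL' βL ▸ hL' β ▸ hβL β) j
  simpa [glmScore, dotProduct] using hscore

/-- Since the GLM lasso solution lies in the generalized Dantzig selector
feasible set, the ℓ₁-minimal feasible point has no larger ℓ₁ norm:
`‖β̂_DS‖₁ ≤ ‖β̂_L‖₁`. -/
theorem stmt_8 (n p : ℕ) (hn : 1 ≤ n) (hp : 1 ≤ p)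
    (x : Fin n → Fin p → ℝ) (y : Fin n → ℝ) (lam : ℝ) (hlam : 0 ≤ lam)
    (b μ : ℝ → ℝ) (hb : ∀ t, HasDerivAt b (μ t) t)
    (L : (Fin p → ℝ) → ℝ)
    (hL : ∀ β, L β =
      -(1 / (n : ℝ)) * ∑ i, (y i * ∑ j, x i j * β j - b (∑ j, x i j * β j)) +
        lam * ∑ j, |β j|)
    (Θ : Set (Fin p → ℝ))
    (hΘ : Θ = {β | ∀ j, (1 / (n : ℝ)) * |∑ i, x i j * (y i - μ (∑ j', x i j' * β j'))| ≤ lam})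
    (βL βDS : Fin p → ℝ)
    (hβL : ∀ β, L βL ≤ L β)
    (hβDSmem : βDS ∈ Θ)
    (hβDSmin : ∀ β ∈ Θ, ∑ j, |βDS j| ≤ ∑ j, |β j|) :
    ∑ j, |βDS j| ≤ ∑ j, |βL j| :=
  stmt_8_general n p x y lam hlam b μ hb L hL Θ hΘ βL βDS hβL hβDSmin
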